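/- arXiv:1706.00119 — 2 statements merged into one kernel-verified Lean document; each statement's English description precedes it below -/
import Mathlib

section
/- Let $P$ be a probability distribution over finite sets (with decision rule inducing joint distribution over actions $a$, outcomes $y$, and sensitive attributes $z$), such that all relevant conditional probabilities are well-defined and positive. If both the calibration condition $P(y, z \mid a) = P(y \mid a) P(z \mid a)$ for all $a,y,z$ and the balance condition $P(a, z \mid y) = P(a \mid y) P(z \mid y)$ for all $a,y,z$ hold, then $P(z \mid a) = P(z \mid y)$ for all $a, y, z$ with $P(a \mid y) > 0$. -/
open Finset

/-
Write `p = P(a,y,z)`, `s = P(a,y)`, `u = P(a,z)` and `v = P(y,z)`. Calibration at `a` says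
`p · P(a) = s · u` and balance at `y` says `p · P(y) = s · v`. Multiplying the first by `P(y)`
and the second by `P(a)` gives `s · u · P(y) = s · v · P(a)`, and cancelling `s = P(a,y) > 0`
yields `u / P(a) = v / P(y)`.
-/

section Factorization

variable {K : Type*} [Field K]

theorem div_eq_div_mul_div_iff_mul_eq_mul {p s u m : K} (hm : m ≠ 0) :
    p / m = s / m * (u / m) ↔ p * m = s * u := by
  rw [div_mul_div_comm, div_eq_div_iff hm (mul_ne_zero hm hm)]
  constructor
  · intro h
    exact mul_right_cancel₀ hm (by linear_combination h)
  · intro h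
    linear_combination m * h

theorem div_eq_div_of_mul_eq_mul_of_mul_eq_mul {p s u v m n : K}
    (hs : s ≠ 0) (hm : m ≠ 0) (hn : n ≠ 0)
    (hpm : p * m = s * u) (hpn : p * n = s * v) : u / m = v / n := by
  rw [div_eq_div_iff hm hn]
  apply mul_left_cancel₀ hs
  linear_combination n * hpm.symm + m * hpn

end Factorization

theorem calibration_and_balance_imply_condZ_eq_general
    {A Y Z : Type*} [Fintype A] [Fintype Y] [Fintype Z]
    (P : A → Y → Z → ℝ)
    (pA : A → ℝ)
    (pY : Y → ℝ)
    (hApos : ∀ a, 0 < pA a) (hYpos : ∀ y, 0 < pY y)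
    -- calibration: P(y, z ∣ a) = P(y ∣ a) · P(z ∣ a)
    (hcal : ∀ a y z,
      P a y z / pA a = ((∑ z', P a y z') / pA a) * ((∑ y', P a y' z) / pA a))
    -- balance: P(a, z ∣ y) = P(a ∣ y) · P(z ∣ y)
    (hbal : ∀ a y z,
      P a y z / pY y = ((∑ z', P a y z') / pY y) * ((∑ a', P a' y z) / pY y)) :
    ∀ a y z, 0 < (∑ z', P a y z') / pY y →
      (∑ y', P a y' z) / pA a = (∑ a', P a' y z) / pY y := by
  intro a y z hay
  have hA := (hApos a).ne'
  have hY := (hYpos y).ne'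
  have hS : ∑ z', P a y z' ≠ 0 := ((div_pos_iff_of_pos_right (hYpos y)).mp hay).ne'
  exact div_eq_div_of_mul_eq_mul_of_mul_eq_mul hS hA hY
    ((div_eq_div_mul_div_iff_mul_eq_mul hA).mp (hcal a y z))
    ((div_eq_div_mul_div_iff_mul_eq_mul hY).mp (hbal a y z))

/-- If both the calibration condition and the balance condition hold for a joint
distribution `P` over actions `a`, outcomes `y` and sensitive attributes `z`
(with positive marginals), then `P(z ∣ a) = P(z ∣ y)` whenever `P(a ∣ y) > 0`. -/
theorem calibration_and_balance_imply_condZ_eq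
    {A Y Z : Type*} [Fintype A] [Fintype Y] [Fintype Z]
    (P : A → Y → Z → ℝ)
    (hPnn : ∀ a y z, 0 ≤ P a y z)
    (hPsum : ∑ a, ∑ y, ∑ z, P a y z = 1)
    (pA : A → ℝ) (hpA : ∀ a, pA a = ∑ y, ∑ z, P a y z)
    (pY : Y → ℝ) (hpY : ∀ y, pY y = ∑ a, ∑ z, P a y z)
    (hApos : ∀ a, 0 < pA a) (hYpos : ∀ y, 0 < pY y)
    -- calibration: P(y, z ∣ a) = P(y ∣ a) · P(z ∣ a)
    (hcal : ∀ a y z,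
      P a y z / pA a = ((∑ z', P a y z') / pA a) * ((∑ y', P a y' z) / pA a))
    -- balance: P(a, z ∣ y) = P(a ∣ y) · P(z ∣ y)
    (hbal : ∀ a y z,
      P a y z / pY y = ((∑ z', P a y z') / pY y) * ((∑ a', P a' y z) / pY y)) :
    ∀ a y z, 0 < (∑ z', P a y z') / pY y →
      (∑ y', P a y' z) / pA a = (∑ a', P a' y z) / pY y :=
  calibration_and_balance_imply_condZ_eq_general P pA pY hApos hYpos hcal hbal
end

section
/- Under the assumptions of the previous result, if moreover $z$ is not independent of $y$ (i.e., there exist $z_0, y_1, y_2$ with $P(z_0 \mid y_1) \neq P(z_0 \mid y_2)$) and the decision rule is not 'perfect' (i.e., $P(y \mid a) > 0$ and $P(a \mid y) > 0$ for all $a, y$), then the calibration and balance conditions cannot both hold. -/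
open Finset

/-!
Calibration and balance factor the same joint mass twice:
`P(a, y, z) = P(a, y) · P(z ∣ a)` and `P(a, y, z) = P(a, y) · P(z ∣ y)`.
If the rule is not perfect, `P(a, y) > 0` can be cancelled, so `P(z ∣ y) = P(z ∣ a)` for a
fixed `a` and every `y`: the law of `z` given `y` does not depend on `y`.
-/

theorem div_eq_div_of_div_eq_mul {K : Type*} [Field K] {p s q r u v : K}
    (hsu : s / u ≠ 0) (hsv : s / v ≠ 0)
    (hu : p / u = s / u * (q / u)) (hv : p / v = s / v * (r / v)) :
    q / u = r / v := by
  obtain ⟨hs, hu0⟩ := div_ne_zero_iff.mp hsu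
  have hv0 : v ≠ 0 := (div_ne_zero_iff.mp hsv).2
  have hpu : p = s * (q / u) := by
    rw [← div_mul_cancel₀ p hu0, hu]; field_simp
  have hpv : p = s * (r / v) := by
    rw [← div_mul_cancel₀ p hv0, hv]; field_simp
  exact mul_left_cancel₀ hs (hpu.symm.trans hpv)

theorem calibration_and_balance_impossible_general
    {A Y Z : Type*} [Fintype A] [Fintype Y] [Fintype Z]
    (P : A → Y → Z → ℝ)
    (pA : A → ℝ)
    (pY : Y → ℝ)
    -- z is not independent of y
    (hdep : ∃ z0 y1 y2, (∑ a', P a' y1 z0) / pY y1 ≠ (∑ a', P a' y2 z0) / pY y2)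
    -- the decision rule is not perfect
    (hperf : ∀ a y, 0 < (∑ z', P a y z') / pA a ∧ 0 < (∑ z', P a y z') / pY y) :
    ¬ ((∀ a y z,
        P a y z / pA a = ((∑ z', P a y z') / pA a) * ((∑ y', P a y' z) / pA a)) ∧
       (∀ a y z,
        P a y z / pY y = ((∑ z', P a y z') / pY y) * ((∑ a', P a' y z) / pY y))) := by
  rintro ⟨hcal, hbal⟩
  obtain ⟨z0, y1, y2, hne⟩ := hdep
  obtain ⟨a⟩ : Nonempty A := by
    by_contra hA
    rw [not_nonempty_iff] at hA
    simp at hne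
  have hcond : ∀ y, (∑ a', P a' y z0) / pY y = (∑ y', P a y' z0) / pA a := fun y =>
    (div_eq_div_of_div_eq_mul (hperf a y).1.ne' (hperf a y).2.ne'
      (hcal a y z0) (hbal a y z0)).symm
  exact hne ((hcond y1).trans (hcond y2).symm)

/-- If `z` is not independent of `y` and the decision rule is not perfect
(`P(y ∣ a) > 0` and `P(a ∣ y) > 0` for all `a, y`), then calibration and
balance cannot both hold. -/
theorem calibration_and_balance_impossible
    {A Y Z : Type*} [Fintype A] [Fintype Y] [Fintype Z]
    (P : A → Y → Z → ℝ)
    (hPnn : ∀ a y z, 0 ≤ P a y z)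
    (hPsum : ∑ a, ∑ y, ∑ z, P a y z = 1)
    (pA : A → ℝ) (hpA : ∀ a, pA a = ∑ y, ∑ z, P a y z)
    (pY : Y → ℝ) (hpY : ∀ y, pY y = ∑ a, ∑ z, P a y z)
    (hApos : ∀ a, 0 < pA a) (hYpos : ∀ y, 0 < pY y)
    -- z is not independent of y
    (hdep : ∃ z0 y1 y2, (∑ a', P a' y1 z0) / pY y1 ≠ (∑ a', P a' y2 z0) / pY y2)
    -- the decision rule is not perfect
    (hperf : ∀ a y, 0 < (∑ z', P a y z') / pA a ∧ 0 < (∑ z', P a y z') / pY y) :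
    ¬ ((∀ a y z,
        P a y z / pA a = ((∑ z', P a y z') / pA a) * ((∑ y', P a y' z) / pA a)) ∧
       (∀ a y z,
        P a y z / pY y = ((∑ z', P a y z') / pY y) * ((∑ a', P a' y z) / pY y))) :=
  calibration_and_balance_impossible_general P pA pY hdep hperf
end
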